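/- arXiv:2112.13301 — 3 statements merged into one kernel-verified Lean document; each statement's English description precedes it below -/
import Mathlib

section
/- Assume: δ ∈ (0, 1/4]; for every j ∈ Q, D_{n−1}^j, D_n^j ∈ (0,1) and δ·D_{n−1}^j ≤ D_n^j; P_i(Q) is nonempty for every i ∈ B; and δ ≤ 1/(1 + e^{θ − η̄ − D̄}), where D̄ = min_{j ∈ Q_1} log(D_n^j/(1−D_n^j)) and η̄ = min_{i ∈ B} [ Σ_{j∈Q_1} d_{ij}·log(1−D_n^j) + Σ_{j∈Q_0} d_{ij}·log(D_n^j/(0.25·D_{n−1}^j)) ]. Then every Beacon-Cover guarantees privacy: for any flip indicator y ∈ {0,1}^Q such that for every i ∈ B there exists j ∈ P_i(Q) with y_j = 1, one has L_i(Q,x,y) ≥ θ for every i ∈ B. -/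
/-- `A_j = log ((1 - D_n^j) / (1 - δ·D_{n-1}^j))`. -/
noncomputable def Acoef {J : Type*} (δ : ℝ) (Dn1 Dn : J → ℝ) (j : J) : ℝ :=
  Real.log ((1 - Dn j) / (1 - δ * Dn1 j))

/-- `B_j = log (D_n^j / (δ·D_{n-1}^j))`. -/
noncomputable def Bcoef {J : Type*} (δ : ℝ) (Dn1 Dn : J → ℝ) (j : J) : ℝ :=
  Real.log (Dn j / (δ * Dn1 j))

/-- The modified LRT statistic of an individual with genome bits `d` under flip
indicator `y`, over query set `Q` with true responses `x`:
`L(Q,x,y) = ∑_{j ∈ Q₁} Δ_j y_j + η(Q)` where `Δ_j = d_j (B_j - A_j)` and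
`η(Q) = ∑_{j ∈ Q₁} d_j A_j + ∑_{j ∈ Q₀} d_j B_j`. -/
noncomputable def LRT {J : Type*} (A B d : J → ℝ) (x : J → Bool) (y : J → ℝ)
    (Q : Finset J) : ℝ :=
  ∑ j ∈ Q.filter (fun j => x j = true), d j * (B j - A j) * y j
    + (∑ j ∈ Q.filter (fun j => x j = true), d j * A j
        + ∑ j ∈ Q.filter (fun j => x j = false), d j * B j)

/-- Appendix A.3: if `δ ∈ (0, 1/4]`, all `D_{n-1}^j, D_n^j ∈ (0,1)`
with `δ·D_{n-1}^j ≤ D_n^j` on `Q`, each individual `i ∈ B` has a nonempty set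
`P_i(Q)` of positive-response positions carrying the minor allele, and
`δ ≤ 1/(1 + exp (θ - η̄ - D̄))`, then every Beacon-Cover guarantees privacy:
any flip indicator `y ∈ {0,1}` hitting `P_i(Q)` for every `i ∈ B` yields
`L_i(Q,x,y) ≥ θ` for every `i ∈ B`. -/
theorem beacon_cover_guarantees_privacy {ι J : Type*}
    (B : Finset ι) (Q : Finset J) (δ θ : ℝ)
    (x : J → Bool) (d : ι → J → ℝ) (Dn1 Dn : J → ℝ)
    (hδ0 : 0 < δ) (hδ : δ ≤ 1 / 4)
    (hD : ∀ j ∈ Q, (0 < Dn1 j ∧ Dn1 j < 1) ∧ (0 < Dn j ∧ Dn j < 1) ∧ δ * Dn1 j ≤ Dn j)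
    (hd : ∀ i j, d i j = 0 ∨ d i j = 1)
    (hB : B.Nonempty)
    (hQ1 : (Q.filter (fun j => x j = true)).Nonempty)
    (hP : ∀ i ∈ B, (Q.filter (fun j => x j = true ∧ d i j = 1)).Nonempty)
    (hδθ : δ ≤ 1 / (1 + Real.exp (θ
      - B.inf' hB (fun i =>
          ∑ j ∈ Q.filter (fun j => x j = true), d i j * Real.log (1 - Dn j)
            + ∑ j ∈ Q.filter (fun j => x j = false),
                d i j * Real.log (Dn j / (0.25 * Dn1 j)))
      - (Q.filter (fun j => x j = true)).inf' hQ1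
          (fun j => Real.log (Dn j / (1 - Dn j)))))) :
    ∀ y : J → ℝ, (∀ j, y j = 0 ∨ y j = 1) →
      (∀ i ∈ B, ∃ j ∈ Q.filter (fun j => x j = true ∧ d i j = 1), y j = 1) →
      ∀ i ∈ B, LRT (Acoef δ Dn1 Dn) (Bcoef δ Dn1 Dn) (d i) x y Q ≥ θ := by
  intro y hy hcover i hi
  classical
  set Q1 := Q.filter (fun j => x j = true) with hQ1def
  set Q0 := Q.filter (fun j => x j = false) with hQ0def
  set ηbar := B.inf' hB (fun i =>
      ∑ j ∈ Q1, d i j * Real.log (1 - Dn j)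
        + ∑ j ∈ Q0, d i j * Real.log (Dn j / (0.25 * Dn1 j))) with hηdef
  set Dbar := Q1.inf' hQ1 (fun j => Real.log (Dn j / (1 - Dn j))) with hDdef
  obtain ⟨j₀, hj₀mem, hyj₀⟩ := hcover i hi
  rw [Finset.mem_filter] at hj₀mem
  obtain ⟨hj₀Q, hxj₀, hdj₀⟩ := hj₀mem
  have hj₀Q1 : j₀ ∈ Q1 := Finset.mem_filter.2 ⟨hj₀Q, hxj₀⟩
  -- basic facts at positions of Q
  have hfacts : ∀ j ∈ Q, 0 < δ * Dn1 j ∧ δ * Dn1 j < 1 ∧ 0 < 1 - Dn j ∧ 0 < Dn j ∧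
      δ * Dn1 j ≤ Dn j ∧ 0 < Dn1 j ∧ Dn1 j < 1 := by
    intro j hj
    obtain ⟨⟨h1, h2⟩, ⟨h3, h4⟩, h5⟩ := hD j hj
    refine ⟨by positivity, by nlinarith, by linarith, h3, h5, h1, h2⟩
  -- termwise bound on Q1
  have key1 : ∀ j ∈ Q1, d i j * (Bcoef δ Dn1 Dn j - Acoef δ Dn1 Dn j) * y j
      + d i j * Acoef δ Dn1 Dn j ≥ d i j * Real.log (1 - Dn j) := by
    intro j hj
    have hjQ : j ∈ Q := (Finset.mem_filter.1 hj).1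
    obtain ⟨p1, p2, p3, p4, p5, p6, p7⟩ := hfacts j hjQ
    rcases hd i j with h | h
    · simp [h]
    · rcases hy j with h' | h'
      · simp only [h, h', one_mul, mul_zero, zero_add]
        unfold Acoef
        apply Real.log_le_log p3
        rw [le_div_iff₀ (by linarith : (0:ℝ) < 1 - δ * Dn1 j)]
        nlinarith
      · simp only [h, h', one_mul, mul_one]
        have hBpos : 0 ≤ Bcoef δ Dn1 Dn j :=
          Real.log_nonneg ((one_le_div p1).2 p5)
        have hlogneg : Real.log (1 - Dn j) ≤ 0 :=
          Real.log_nonpos (by linarith) (by linarith)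
        linarith
  -- the special bound at j₀
  have key2 : d i j₀ * (Bcoef δ Dn1 Dn j₀ - Acoef δ Dn1 Dn j₀) * y j₀
      + d i j₀ * Acoef δ Dn1 Dn j₀
      ≥ d i j₀ * Real.log (1 - Dn j₀) + (Dbar - Real.log δ) := by
    obtain ⟨p1, p2, p3, p4, p5, p6, p7⟩ := hfacts j₀ hj₀Q
    rw [hdj₀, hyj₀]
    simp only [one_mul, mul_one]
    have hDle : Dbar ≤ Real.log (Dn j₀ / (1 - Dn j₀)) := by
      rw [hDdef]; exact Finset.inf'_le _ hj₀Q1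
    have hexp : Bcoef δ Dn1 Dn j₀
        = Real.log (Dn j₀) - Real.log δ - Real.log (Dn1 j₀) := by
      unfold Bcoef
      rw [Real.log_div (by linarith) (by positivity),
        Real.log_mul (ne_of_gt hδ0) (ne_of_gt p6)]
      ring
    have hratio : Real.log (Dn j₀ / (1 - Dn j₀))
        = Real.log (Dn j₀) - Real.log (1 - Dn j₀) :=
      Real.log_div (by linarith) (by linarith)
    have hlog1 : Real.log (Dn1 j₀) ≤ 0 := Real.log_nonpos (by linarith) (by linarith)
    linarith
  -- sum over Q1
  have sum1 : ∑ j ∈ Q1, (d i j * (Bcoef δ Dn1 Dn j - Acoef δ Dn1 Dn j) * y j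
      + d i j * Acoef δ Dn1 Dn j)
      ≥ ∑ j ∈ Q1, d i j * Real.log (1 - Dn j) + (Dbar - Real.log δ) := by
    rw [← Finset.add_sum_erase Q1 _ hj₀Q1,
      ← Finset.add_sum_erase Q1 (fun j => d i j * Real.log (1 - Dn j)) hj₀Q1]
    have herase : ∑ j ∈ Q1.erase j₀, (d i j * (Bcoef δ Dn1 Dn j - Acoef δ Dn1 Dn j) * y j
        + d i j * Acoef δ Dn1 Dn j)
        ≥ ∑ j ∈ Q1.erase j₀, d i j * Real.log (1 - Dn j) :=
      Finset.sum_le_sum (fun j hj => key1 j (Finset.mem_of_mem_erase hj))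
    linarith [key2, herase]
  -- termwise bound on Q0
  have key0 : ∀ j ∈ Q0, d i j * Bcoef δ Dn1 Dn j
      ≥ d i j * Real.log (Dn j / (0.25 * Dn1 j)) := by
    intro j hj
    have hjQ : j ∈ Q := (Finset.mem_filter.1 hj).1
    obtain ⟨p1, p2, p3, p4, p5, p6, p7⟩ := hfacts j hjQ
    rcases hd i j with h | h
    · simp [h]
    · simp only [h, one_mul, ge_iff_le]
      unfold Bcoef
      apply Real.log_le_log (by positivity)
      apply div_le_div_of_nonneg_left (le_of_lt p4) p1
      nlinarith
  have sum0 : ∑ j ∈ Q0, d i j * Bcoef δ Dn1 Dn j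
      ≥ ∑ j ∈ Q0, d i j * Real.log (Dn j / (0.25 * Dn1 j)) :=
    Finset.sum_le_sum key0
  -- ηbar bound
  have hηle : ηbar ≤ ∑ j ∈ Q1, d i j * Real.log (1 - Dn j)
      + ∑ j ∈ Q0, d i j * Real.log (Dn j / (0.25 * Dn1 j)) := by
    rw [hηdef]; exact Finset.inf'_le _ hi
  -- θ - ηbar - Dbar ≤ - log δ
  have hθ : θ - ηbar - Dbar ≤ - Real.log δ := by
    set t := θ - ηbar - Dbar with ht
    have h1 : (0:ℝ) < 1 + Real.exp t := by positivity
    have h2 : δ * (1 + Real.exp t) ≤ 1 := by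
      rw [← le_div_iff₀ h1]; exact hδθ
    have h3 : Real.exp t ≤ 1 / δ := by
      rw [le_div_iff₀ hδ0]
      nlinarith [Real.exp_pos t, hδ0]
    have h4 := Real.log_le_log (Real.exp_pos t) h3
    rw [Real.log_exp, one_div, Real.log_inv] at h4
    exact h4
  -- combine
  unfold LRT
  have hsplit : ∑ j ∈ Q1, d i j * (Bcoef δ Dn1 Dn j - Acoef δ Dn1 Dn j) * y j
      + ∑ j ∈ Q1, d i j * Acoef δ Dn1 Dn j
      = ∑ j ∈ Q1, (d i j * (Bcoef δ Dn1 Dn j - Acoef δ Dn1 Dn j) * y j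
        + d i j * Acoef δ Dn1 Dn j) := (Finset.sum_add_distrib).symm
  show ∑ j ∈ Q1, d i j * (Bcoef δ Dn1 Dn j - Acoef δ Dn1 Dn j) * y j
      + (∑ j ∈ Q1, d i j * Acoef δ Dn1 Dn j + ∑ j ∈ Q0, d i j * Bcoef δ Dn1 Dn j) ≥ θ
  linarith [sum1, sum0, hηle, hθ, hsplit]
end

section
/- Online Greedy guarantees privacy against fixed-threshold attacks in the authenticated online setting. Precisely: let q_1, …, q_T be a non-repeating sequence of query positions, let x_j ∈ {0,1} be the true responses, d_{ij} ∈ {0,1} the genome bits of individuals i ∈ B, and assume B_j > 0 and B_j > A_j for all j (as holds when δ < 1/4 ≤ D_n^j/D_{n−1}^j). Define Q_t = {q_1, …, q_t}, and define the flip indicator y recursively: y_{q_t} = 1 if and only if some i ∈ B has L_i(Q_t, x, y^{(t−1)}) < θ, where y^{(t−1)} denotes the flips already committed on Q_{t−1} with y_{q_t} provisionally 0. If θ ≤ 0, then for every individual i ∈ B and every time 0 ≤ t ≤ T, L_i(Q_t, x, y) ≥ θ. -/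
lemma LRT_insert {J : Type*} [DecidableEq J] (A B d : J → ℝ) (x : J → Bool) (y : J → ℝ)
    (Q : Finset J) (a : J) (ha : a ∉ Q) :
    LRT A B d x y (insert a Q)
      = LRT A B d x y Q
        + (if x a = true then d a * (B a - A a) * y a + d a * A a else d a * B a) := by
  have h1 : a ∉ Q.filter (fun j => x j = true) := fun h => ha (Finset.mem_of_mem_filter a h)
  have h0 : a ∉ Q.filter (fun j => x j = false) := fun h => ha (Finset.mem_of_mem_filter a h)
  unfold LRT
  by_cases hx : x a = true
  · simp [Finset.filter_insert, hx, Finset.sum_insert h1]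
    ring
  · simp [Finset.filter_insert, hx, Finset.sum_insert h0]
    ring

/-- Proposition 5, Appendix A.4: Online Greedy guarantees privacy
against fixed-threshold attacks in the authenticated online setting.  Let
`q 1, …, q T` be a non-repeating query sequence, `x` the true responses, `d`
the genome bits of individuals in `B`, and assume `B_j > 0` and `B_j > A_j`
for all `j`.  Let `Q_t = {q 1, …, q t}` and let the flip indicator `y` satisfy
the greedy recursion: `y (q t) = 1` iff some `i ∈ B` has
`L_i(Q_t, x, y^{(t-1)}) < θ`, where `y^{(t-1)}` equals `y` except provisionally
`0` at `q t`.  If `θ ≤ 0`, then `L_i(Q_t, x, y) ≥ θ` for every `i ∈ B` and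
every `0 ≤ t ≤ T`. -/
theorem online_greedy_privacy {ι J : Type*} [DecidableEq J]
    (B : Finset ι) (T : ℕ) (q : ℕ → J) (δ θ : ℝ)
    (x : J → Bool) (d : ι → J → ℝ) (Dn1 Dn : J → ℝ) (y : J → ℝ)
    (hδ0 : 0 < δ) (hδ1 : δ < 1)
    (hD : ∀ j, (0 < Dn1 j ∧ Dn1 j < 1) ∧ (0 < Dn j ∧ Dn j < 1))
    (hd : ∀ i j, d i j = 0 ∨ d i j = 1)
    (hy : ∀ j, y j = 0 ∨ y j = 1)
    (hBpos : ∀ j, 0 < Bcoef δ Dn1 Dn j)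
    (hBA : ∀ j, Acoef δ Dn1 Dn j < Bcoef δ Dn1 Dn j)
    (hinj : ∀ s ∈ Finset.Icc 1 T, ∀ t ∈ Finset.Icc 1 T, q s = q t → s = t)
    (hrec : ∀ t, 1 ≤ t → t ≤ T →
      (y (q t) = 1 ↔ ∃ i ∈ B,
        LRT (Acoef δ Dn1 Dn) (Bcoef δ Dn1 Dn) (d i) x (Function.update y (q t) 0)
          ((Finset.Icc 1 t).image q) < θ))
    (hθ : θ ≤ 0) :
    ∀ i ∈ B, ∀ t ≤ T,
      LRT (Acoef δ Dn1 Dn) (Bcoef δ Dn1 Dn) (d i) x y ((Finset.Icc 1 t).image q) ≥ θ := by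
  intro i hi t
  induction t with
  | zero =>
    intro _
    simpa [LRT] using hθ
  | succ t ih =>
    intro hle
    have ht1 : 1 ≤ t + 1 := Nat.succ_le_succ (Nat.zero_le t)
    have htT : t ≤ T := le_trans (Nat.le_succ t) hle
    have hqn : q (t + 1) ∉ (Finset.Icc 1 t).image q := by
      intro h
      obtain ⟨s, hs, hqs⟩ := Finset.mem_image.mp h
      obtain ⟨hs1, hs2⟩ := Finset.mem_Icc.mp hs
      have hseq : s = t + 1 :=
        hinj s (Finset.mem_Icc.mpr ⟨hs1, le_trans hs2 htT⟩)
          (t + 1) (Finset.mem_Icc.mpr ⟨ht1, hle⟩) hqs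
      omega
    have hQ : (Finset.Icc 1 (t + 1)).image q
        = insert (q (t + 1)) ((Finset.Icc 1 t).image q) := by
      rw [show Finset.Icc 1 (t + 1) = insert (t + 1) (Finset.Icc 1 t) by
        ext n; simp [Finset.mem_Icc]; omega, Finset.image_insert]
    rcases hy (q (t + 1)) with h0 | h1
    · have hupd : Function.update y (q (t + 1)) 0 = y := by
        rw [← h0]; exact Function.update_eq_self _ _
      have hnotex : ¬ ∃ i ∈ B,
          LRT (Acoef δ Dn1 Dn) (Bcoef δ Dn1 Dn) (d i) x
            (Function.update y (q (t + 1)) 0) ((Finset.Icc 1 (t + 1)).image q) < θ := by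
        intro hex
        have := (hrec (t + 1) ht1 hle).mpr hex
        rw [h0] at this
        norm_num at this
      push_neg at hnotex
      have := hnotex i hi
      rw [hupd] at this
      exact this
    · have ihle := ih htT
      rw [hQ, LRT_insert _ _ _ _ _ _ _ hqn]
      have hB := hBpos (q (t + 1))
      have hA := hBA (q (t + 1))
      rcases hd i (q (t + 1)) with hd0 | hd1
      · by_cases hx : x (q (t + 1)) = true <;> simp [hx, hd0] <;> linarith
      · by_cases hx : x (q (t + 1)) = true <;> simp [hx, hd1, h1] <;> linarith
end

section
/- In the unauthenticated access setting with a fixed-threshold attack, the worst-case privacy condition reduces to a simple sum over unflipped positive-response positions: assuming A_j < 0 < B_j for all j, for every individual i, min over all subsets Q' ⊆ S of L_i(Q', x, y) equals Σ_{j ∈ P_i(S), y_j = 0} A_j. Consequently, the privacy condition min_{Q' ⊆ S} L_i(Q',x,y) ≥ θ is equivalent to Σ_{j ∈ P_i(S) \ F} A_j ≥ θ, where F = {j : y_j = 1}. -/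
/-- Proposition 7, Appendix A.5: in the unauthenticated
fixed-threshold setting, assuming `A_j < 0 < B_j` for all `j`, the minimum over
all subsets `Q' ⊆ S` of `L(Q', x, y)` equals `∑_{j ∈ P(S), y_j = 0} A_j`
(the sum over unflipped positive-response positions carrying the minor allele);
consequently the worst-case privacy condition `min_{Q' ⊆ S} L(Q',x,y) ≥ θ` is
equivalent to `∑_{j ∈ P(S) \ F} A_j ≥ θ` where `F = {j : y_j = 1}`. -/
theorem unauth_fixed_threshold_reduction {J : Type*}
    (S : Finset J) (δ θ : ℝ)
    (x : J → Bool) (d : J → ℝ) (Dn1 Dn : J → ℝ) (y : J → ℝ)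
    (hδ0 : 0 < δ) (hδ1 : δ < 1)
    (hD : ∀ j, (0 < Dn1 j ∧ Dn1 j < 1) ∧ (0 < Dn j ∧ Dn j < 1))
    (hd : ∀ j, d j = 0 ∨ d j = 1)
    (hy : ∀ j, y j = 0 ∨ y j = 1)
    (hA : ∀ j, Acoef δ Dn1 Dn j < 0)
    (hB : ∀ j, 0 < Bcoef δ Dn1 Dn j) :
    IsLeast {r : ℝ | ∃ Q' ⊆ S, r = LRT (Acoef δ Dn1 Dn) (Bcoef δ Dn1 Dn) d x y Q'}
        (∑ j ∈ S.filter (fun j => x j = true ∧ d j = 1 ∧ y j = 0), Acoef δ Dn1 Dn j)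
      ∧ ((∀ Q' ⊆ S, LRT (Acoef δ Dn1 Dn) (Bcoef δ Dn1 Dn) d x y Q' ≥ θ) ↔
          ∑ j ∈ S.filter (fun j => x j = true ∧ d j = 1 ∧ y j = 0),
            Acoef δ Dn1 Dn j ≥ θ) := by
  classical
  set A := Acoef δ Dn1 Dn with hAdef
  set B := Bcoef δ Dn1 Dn with hBdef
  set c : J → ℝ := fun j => if x j = true then d j * (B j - A j) * y j + d j * A j else d j * B j with hc
  have hLRT : ∀ Q : Finset J, LRT A B d x y Q = ∑ j ∈ Q, c j := by
    intro Q
    unfold LRT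
    rw [Finset.sum_filter, Finset.sum_filter, Finset.sum_filter,
      ← Finset.sum_add_distrib, ← Finset.sum_add_distrib]
    refine Finset.sum_congr rfl fun j _ => ?_
    by_cases h : x j = true <;> simp [hc, h]
  set P : J → Prop := fun j => x j = true ∧ d j = 1 ∧ y j = 0 with hP
  have hcP : ∀ j, P j → c j = A j := by
    rintro j ⟨h1, h2, h3⟩
    simp [hc, h1, h2, h3]
  have hcnonneg : ∀ j, ¬ P j → 0 ≤ c j := by
    intro j hj
    by_cases h1 : x j = true
    · rcases hd j with h2 | h2
      · simp [hc, h1, h2]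
      · rcases hy j with h3 | h3
        · exact absurd ⟨h1, h2, h3⟩ hj
        · have : c j = B j := by simp [hc, h1, h2, h3]
          linarith [hB j]
    · rcases hd j with h2 | h2
      · simp [hc, h1, h2]
      · have : c j = B j := by simp [hc, h1, h2]
        linarith [hB j]
  have hlb : ∀ Q' ⊆ S, ∑ j ∈ S.filter P, A j ≤ LRT A B d x y Q' := by
    intro Q' hQ'
    rw [hLRT]
    have step1 : ∑ j ∈ Q'.filter P, c j ≤ ∑ j ∈ Q', c j :=
      Finset.sum_le_sum_of_subset_of_nonneg (Finset.filter_subset _ _)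
        (fun j _ hj => hcnonneg j (by simpa using fun h => hj (Finset.mem_filter.mpr ⟨‹j ∈ Q'›, h⟩)))
    have heq : ∑ j ∈ Q'.filter P, c j = ∑ j ∈ Q'.filter P, A j :=
      Finset.sum_congr rfl fun j hj => hcP j (Finset.mem_filter.mp hj).2
    have hsub : Q'.filter P ⊆ S.filter P := Finset.filter_subset_filter _ hQ'
    have step2 : ∑ j ∈ S.filter P, A j ≤ ∑ j ∈ Q'.filter P, A j := by
      have := Finset.sum_le_sum_of_subset_of_nonneg (f := fun j => -A j) hsub
        (fun j _ _ => le_of_lt (by simpa using hA j))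
      simpa using this
    linarith
  have hmem : LRT A B d x y (S.filter P) = ∑ j ∈ S.filter P, A j := by
    rw [hLRT]
    exact Finset.sum_congr rfl fun j hj => hcP j (Finset.mem_filter.mp hj).2
  constructor
  · constructor
    · exact ⟨S.filter P, Finset.filter_subset _ _, hmem.symm⟩
    · rintro r ⟨Q', hQ', rfl⟩
      exact hlb Q' hQ'
  · constructor
    · intro h
      have := h (S.filter P) (Finset.filter_subset _ _)
      rwa [hmem] at this
    · intro h Q' hQ'
      exact le_trans h (hlb Q' hQ')
end
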